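/- arXiv:1201.4672 — 2 statements merged into one kernel-verified Lean document; each statement's English description precedes it below -/
import Mathlib

section
/- Let L ≥ 1. Let c_1, …, c_L > 0 with Σ_{k=1}^L c_k = 1 and ρ_1 < ⋯ < ρ_L be real numbers, and let x_1, …, x_L > 0 with Σ_{i=1}^L x_i = 1 and y_1 < ⋯ < y_L be real numbers. If Σ_{i=1}^L x_i y_i^m = Σ_{k=1}^L c_k ρ_k^m for every 1 ≤ m ≤ 2L−1, then x_i = c_i and y_i = ρ_i for all 1 ≤ i ≤ L. -/
/-!
Equal moments of orders `< 2L` mean that both measures integrate every polynomial of degree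
`< 2L` to the same value. Together the two measures have at most `2L` atoms, so for each point
`t` the polynomial vanishing at all these atoms except `t` is admissible, and testing with it
shows that both measures give `t` the same mass. Positive weights then force the two sets of
atoms to coincide, and listing them in increasing order matches them index by index.
-/

open Finset Polynomial Lagrange

section AtomicMeasure

variable {R ι κ : Type*} [Fintype ι] [Fintype κ]

theorem sum_mul_eval_eq_of_sum_mul_pow_eq [CommSemiring R] {x y : ι → R} {c ρ : κ → R}
    {n : ℕ} (hmom : ∀ m < n, ∑ i, x i * y i ^ m = ∑ k, c k * ρ k ^ m)
    {p : R[X]} (hp : p.natDegree < n) :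
    ∑ i, x i * p.eval (y i) = ∑ k, c k * p.eval (ρ k) := by
  simp only [eval_eq_sum_range' hp, mul_sum]
  rw [sum_comm, sum_comm (s := univ)]
  refine sum_congr rfl fun m hm => ?_
  simp only [mul_left_comm (x _), mul_left_comm (c _), ← mul_sum, hmom m (mem_range.mp hm)]

theorem sum_mul_eval_nodal_erase [CommRing R] [DecidableEq R] {x y : ι → R} {S : Finset R}
    (hS : ∀ i, y i ∈ S) (t : R) :
    ∑ i, x i * (nodal (S.erase t) id).eval (y i) =
      (∑ i with y i = t, x i) * (nodal (S.erase t) id).eval t := by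
  rw [sum_mul, sum_filter]
  refine sum_congr rfl fun i _ => ?_
  split_ifs with h
  · rw [h]
  · exact mul_eq_zero_of_right _ (eval_nodal_at_node (v := id) (mem_erase.mpr ⟨h, hS i⟩))

theorem sum_filter_eq_of_sum_mul_eval_eq [CommRing R] [IsDomain R] [DecidableEq R]
    {x y : ι → R} {c ρ : κ → R}
    (h : ∀ p : R[X], p.natDegree < Fintype.card ι + Fintype.card κ →
      ∑ i, x i * p.eval (y i) = ∑ k, c k * p.eval (ρ k)) (t : R) :
    ∑ i with y i = t, x i = ∑ k with ρ k = t, c k := by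
  set S := univ.image y ∪ univ.image ρ
  have hyS (i : ι) : y i ∈ S := mem_union_left _ (mem_image_of_mem y (mem_univ i))
  have hρS (k : κ) : ρ k ∈ S := mem_union_right _ (mem_image_of_mem ρ (mem_univ k))
  by_cases ht : t ∈ S
  · have hdeg : (nodal (S.erase t) id).natDegree < Fintype.card ι + Fintype.card κ := by
      rw [natDegree_nodal]
      calc #(S.erase t) < #S := card_erase_lt_of_mem ht
        _ ≤ #(univ.image y) + #(univ.image ρ) := card_union_le _ _
        _ ≤ Fintype.card ι + Fintype.card κ := add_le_add card_image_le card_image_le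
    have hne : (nodal (S.erase t) id).eval t ≠ 0 :=
      eval_nodal_not_at_node fun s hs => (ne_of_mem_erase hs).symm
    have := h _ hdeg
    rw [sum_mul_eval_nodal_erase hyS, sum_mul_eval_nodal_erase hρS] at this
    exact mul_right_cancel₀ hne this
  · rw [filter_false_of_mem fun i _ (h : y i = t) => ht (h ▸ hyS i),
      filter_false_of_mem fun k _ (h : ρ k = t) => ht (h ▸ hρS k), sum_empty, sum_empty]

theorem sum_filter_apply_eq_of_injective {α : Type*} [AddCommMonoid R] [DecidableEq α]
    {x : ι → R} {y : ι → α} (hy : Function.Injective y) (j : ι) :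
    ∑ i with y i = y j, x i = x j := by
  rw [sum_eq_single_of_mem j (by simp)]
  intro i hi hij
  exact absurd (hy (mem_filter.mp hi).2) hij

theorem mem_range_of_sum_filter_eq [AddCommMonoid R] [DecidableEq R]
    {x y : ι → R} {c ρ : κ → R} (hy : Function.Injective y) {j : ι} (hx : x j ≠ 0)
    (h : ∑ i with y i = y j, x i = ∑ k with ρ k = y j, c k) : y j ∈ Set.range ρ := by
  rw [sum_filter_apply_eq_of_injective hy] at h
  obtain ⟨k, hk, -⟩ := exists_ne_zero_of_sum_ne_zero (h ▸ hx)
  exact ⟨k, (mem_filter.mp hk).2⟩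

end AtomicMeasure

theorem atomic_measure_moment_identifiability_general (L : ℕ)
    (c ρ x y : Fin L → ℝ)
    (hc : ∀ k, 0 < c k) (hcsum : ∑ k, c k = 1) (hρ : StrictMono ρ)
    (hx : ∀ i, 0 < x i) (hxsum : ∑ i, x i = 1) (hy : StrictMono y)
    (hmom : ∀ m : ℕ, 1 ≤ m → m ≤ 2 * L - 1 →
      ∑ i, x i * y i ^ m = ∑ k, c k * ρ k ^ m) :
    (∀ i, x i = c i) ∧ (∀ i, y i = ρ i) := by
  have hmom_lt : ∀ m < 2 * L, ∑ i, x i * y i ^ m = ∑ k, c k * ρ k ^ m := by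
    rintro (_ | m) hm
    · simp [hxsum, hcsum]
    · exact hmom (m + 1) (by omega) (by omega)
  have hmass : ∀ t, ∑ i with y i = t, x i = ∑ k with ρ k = t, c k :=
    sum_filter_eq_of_sum_mul_eval_eq fun p hp =>
      sum_mul_eval_eq_of_sum_mul_pow_eq hmom_lt (by simpa [two_mul] using hp)
  have hrange : Set.range y = Set.range ρ := by
    apply subset_antisymm
    · rintro _ ⟨j, rfl⟩
      exact mem_range_of_sum_filter_eq hy.injective (hx j).ne' (hmass _)
    · rintro _ ⟨k, rfl⟩
      exact mem_range_of_sum_filter_eq hρ.injective (hc k).ne' (hmass _).symm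
  obtain rfl : y = ρ := (hy.range_inj hρ).mp hrange
  refine ⟨fun i => ?_, fun _ => rfl⟩
  simpa only [sum_filter_apply_eq_of_injective hy.injective] using hmass (y i)

/-- **Identifiability of an L-atomic probability measure from its first 2L-1 moments.**
If `(x, y)` and `(c, ρ)` are two systems of positive weights summing to one with strictly
increasing atoms, and they share the moments of orders `1, …, 2L-1`, then they coincide. -/
theorem atomic_measure_moment_identifiability (L : ℕ) (hL : 1 ≤ L)
    (c ρ x y : Fin L → ℝ)
    (hc : ∀ k, 0 < c k) (hcsum : ∑ k, c k = 1) (hρ : StrictMono ρ)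
    (hx : ∀ i, 0 < x i) (hxsum : ∑ i, x i = 1) (hy : StrictMono y)
    (hmom : ∀ m : ℕ, 1 ≤ m → m ≤ 2 * L - 1 →
      ∑ i, x i * y i ^ m = ∑ k, c k * ρ k ^ m) :
    (∀ i, x i = c i) ∧ (∀ i, y i = ρ i) :=
  atomic_measure_moment_identifiability_general L c ρ x y hc hcsum hρ hx hxsum hy hmom
end

section
/- Let L ≥ 1, let 0 < ρ_1 < ⋯ < ρ_L be distinct positive reals and c_1, …, c_L > 0 with Σ_{k=1}^L c_k = 1, and set γ_m = Σ_{k=1}^L c_k ρ_k^m for 1 ≤ m ≤ 2L−1. Let, for each n ∈ ℕ and each 1 ≤ m ≤ 2L−1, γ̂_m^{(n)} be a real number with γ̂_m^{(n)} → γ_m as n → ∞. Then there exists n₀ such that for every n ≥ n₀ the system of 2L equations in 2L real unknowns — Σ_{i=1}^L x_i = 1 and Σ_{i=1}^L x_i y_i^m = γ̂_m^{(n)} for 1 ≤ m ≤ 2L−1 — admits exactly one solution (x_1^{(n)},…,x_L^{(n)},y_1^{(n)},…,y_L^{(n)}) with x_i^{(n)} > 0 for all i and y_1^{(n)} < ⋯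 < y_L^{(n)}; moreover this solution converges to (c_1,…,c_L,ρ_1,…,ρ_L) as n → ∞. -/
/-!
The moment map `(x, y) ↦ (∑ᵢ xᵢ yᵢ^m)_{m < 2L}` is injective on configurations with nonzero
weights and increasing nodes: a polynomial of degree `< 2L` that vanishes at the nodes of one
configuration but not at a given node of the other separates them. Its derivative at `(c, ρ)` is
injective as well, by the same duality with the test polynomials `Bⱼ² (X - ρⱼ)`, `Bⱼ` the Lagrange
basis, so by the inverse function theorem the moment map has a continuous local inverse near
`(c, ρ)`. Applied to the estimated moments it gives, for large `n`, an admissible solution that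
converges to `(c, ρ)`, and global injectivity makes it the only one.
-/

open Filter Polynomial Finset Topology

theorem Polynomial.linearMap_eq_zero_of_natDegree_lt {R M : Type*} [CommSemiring R]
    [AddCommMonoid M] [Module R M] (Λ : R[X] →ₗ[R] M) {N : ℕ} (h : ∀ m < N, Λ (X ^ m) = 0)
    {P : R[X]} (hP : P.natDegree < N) : Λ P = 0 := by
  rw [P.as_sum_range' N hP, map_sum]
  refine sum_eq_zero fun m hm => ?_
  rw [← smul_X_eq_monomial, map_smul, h m (mem_range.mp hm), smul_zero]

section Evaluation

variable {ι K : Type*} [Fintype ι] [Field K]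

theorem sum_mul_eval_add_mul_eval_derivative_eq_zero {u w t : ι → K} {N : ℕ}
    (h : ∀ m < N, ∑ i, (u i * t i ^ m + w i * (m * t i ^ (m - 1))) = 0)
    {P : K[X]} (hP : P.natDegree < N) :
    ∑ i, (u i * P.eval (t i) + w i * P.derivative.eval (t i)) = 0 := by
  let Λ : K[X] →ₗ[K] K := ∑ i, (u i • leval (t i) + w i • (leval (t i)).comp derivative)
  have hΛ (m : ℕ) (hm : m < N) : Λ (X ^ m) = 0 := by simpa [Λ, derivative_X_pow] using h m hm
  simpa [Λ] using linearMap_eq_zero_of_natDegree_lt Λ hΛ hP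

theorem sum_mul_eval_eq_zero {u t : ι → K} {N : ℕ} (h : ∀ m < N, ∑ i, u i * t i ^ m = 0)
    {P : K[X]} (hP : P.natDegree < N) : ∑ i, u i * P.eval (t i) = 0 := by
  simpa using sum_mul_eval_add_mul_eval_derivative_eq_zero (w := 0) (by simpa using h) hP

theorem eq_zero_of_sum_mul_pow_eq_zero {u t : ι → K} (ht : Function.Injective t)
    (h : ∀ m < Fintype.card ι, ∑ i, u i * t i ^ m = 0) : u = 0 := by
  classical
  funext j
  have hdeg : (Lagrange.basis univ t j).natDegree < Fintype.card ι := by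
    rw [Lagrange.natDegree_basis ht.injOn (mem_univ j), card_univ]
    have := Fintype.card_pos_iff.mpr ⟨j⟩
    omega
  have := sum_mul_eval_eq_zero h hdeg
  rwa [Fintype.sum_eq_single j fun i hij => by
    rw [Lagrange.eval_basis_of_ne hij.symm (mem_univ i), mul_zero],
    Lagrange.eval_basis_self ht.injOn (mem_univ j), mul_one] at this

theorem range_subset_of_sum_mul_pow_eq {κ : Type*} [Fintype κ] {x y : ι → K} {x' y' : κ → K}
    (hy : Function.Injective y) (hx : ∀ i, x i ≠ 0)
    (h : ∀ m < Fintype.card ι + Fintype.card κ, ∑ i, x i * y i ^ m = ∑ k, x' k * y' k ^ m) :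
    Set.range y ⊆ Set.range y' := by
  classical
  rintro _ ⟨i, rfl⟩
  by_contra hi
  set P := Lagrange.basis univ y i * Lagrange.nodal univ y'
  have hdeg : P.natDegree < Fintype.card ι + Fintype.card κ := by
    have := Fintype.card_pos_iff.mpr ⟨i⟩
    rw [natDegree_mul (Lagrange.basis_ne_zero hy.injOn (mem_univ i)) Lagrange.nodal_ne_zero,
      Lagrange.natDegree_basis hy.injOn (mem_univ i), Lagrange.natDegree_nodal, card_univ,
      card_univ]
    omega
  have hsum := sum_mul_eval_eq_zero (u := Sum.elim x (-x')) (t := Sum.elim y y')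
    (N := Fintype.card ι + Fintype.card κ)
    (fun m hm => by simp [Fintype.sum_sum_type, h m hm]) hdeg
  have hnodes : ∀ k, P.eval (y' k) = 0 := fun k => by
    simp [P, Lagrange.eval_nodal_at_node (mem_univ k)]
  rw [Fintype.sum_sum_type] at hsum
  simp only [Sum.elim_inl, Sum.elim_inr, hnodes, mul_zero, sum_const_zero, add_zero] at hsum
  rw [Fintype.sum_eq_single i fun j hji => by simp [P, Lagrange.eval_basis_of_ne hji.symm]] at hsum
  refine mul_ne_zero (hx i) ?_ hsum
  simp only [P, eval_mul, Lagrange.eval_basis_self hy.injOn (mem_univ i), one_mul]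
  exact Lagrange.eval_nodal_not_at_node fun k _ hk => hi ⟨k, hk.symm⟩

theorem eq_zero_of_sum_mul_pow_add_mul_derivative_eq_zero {u v c ρ : ι → K}
    (hρ : Function.Injective ρ) (hc : ∀ i, c i ≠ 0)
    (h : ∀ m < 2 * Fintype.card ι,
      ∑ i, (u i * ρ i ^ m + c i * v i * (m * ρ i ^ (m - 1))) = 0) :
    u = 0 ∧ v = 0 := by
  classical
  have hv : v = 0 := by
    funext j
    set B := Lagrange.basis univ ρ j
    -- `B ^ 2 * (X - ρ j)` vanishes at every node, and so does its derivative except at `ρ j`.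
    have hdeg : (B ^ 2 * (X - C (ρ j))).natDegree < 2 * Fintype.card ι := by
      have := Fintype.card_pos_iff.mpr ⟨j⟩
      have hB : B.natDegree = Fintype.card ι - 1 := by
        rw [Lagrange.natDegree_basis hρ.injOn (mem_univ j), card_univ]
      calc _ ≤ (B ^ 2).natDegree + (X - C (ρ j)).natDegree := natDegree_mul_le
        _ ≤ 2 * B.natDegree + 1 := by
          gcongr
          · exact natDegree_pow_le
          · exact (natDegree_X_sub_C _).le
        _ < 2 * Fintype.card ι := by omega
    have hsum := sum_mul_eval_add_mul_eval_derivative_eq_zero h hdeg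
    rw [Fintype.sum_eq_single j fun i hij => by
      simp [B, Lagrange.eval_basis_of_ne hij.symm, derivative_mul, derivative_pow]] at hsum
    simpa [B, derivative_mul, Lagrange.eval_basis_self hρ.injOn, hc j] using hsum
  subst hv
  refine ⟨eq_zero_of_sum_mul_pow_eq_zero hρ fun m hm => ?_, rfl⟩
  simpa using h m (by omega)

end Evaluation

section Moments

open ContinuousLinearMap

def momentMap {ι R : Type*} [Fintype ι] [CommSemiring R] (N : ℕ) (p : (ι → R) × (ι → R)) :
    Fin N → R :=
  fun m => ∑ i, p.1 i * p.2 i ^ (m : ℕ)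

theorem momentMap_injOn {K : Type*} [Field K] [LinearOrder K] {L : ℕ} :
    Set.InjOn (momentMap (2 * L))
      {p : (Fin L → K) × (Fin L → K) | (∀ i, p.1 i ≠ 0) ∧ StrictMono p.2} := by
  rintro ⟨x, y⟩ ⟨hx, hy⟩ ⟨x', y'⟩ ⟨hx', hy'⟩ hxy
  have hmom (m : ℕ) (hm : m < Fintype.card (Fin L) + Fintype.card (Fin L)) :
      ∑ i, x i * y i ^ m = ∑ i, x' i * y' i ^ m :=
    congrFun hxy ⟨m, by simpa [two_mul] using hm⟩
  obtain rfl : y = y' := (hy.range_inj hy').1 <|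
    (range_subset_of_sum_mul_pow_eq hy.injective hx hmom).antisymm
      (range_subset_of_sum_mul_pow_eq hy'.injective hx' fun m hm => (hmom m hm).symm)
  have hx : x - x' = 0 := eq_zero_of_sum_mul_pow_eq_zero hy.injective fun m hm => by
    simp [sub_mul, hmom m (by omega)]
  rw [sub_eq_zero.1 hx]

variable {𝕜 ι : Type*} [NontriviallyNormedField 𝕜] [Fintype ι]

noncomputable def momentDeriv (N : ℕ) (p : (ι → 𝕜) × (ι → 𝕜)) :
    ((ι → 𝕜) × (ι → 𝕜)) →L[𝕜] (Fin N → 𝕜) :=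
  pi fun m => ∑ i, (p.1 i • (((m : ℕ) • p.2 i ^ ((m : ℕ) - 1)) • (proj i ∘L snd 𝕜 _ _)) +
    p.2 i ^ (m : ℕ) • (proj i ∘L fst 𝕜 _ _))

theorem momentDeriv_apply (N : ℕ) (p : (ι → 𝕜) × (ι → 𝕜)) (u v : ι → 𝕜) (m : Fin N) :
    momentDeriv N p (u, v) m =
      ∑ i, (u i * p.2 i ^ (m : ℕ) + p.1 i * v i * (m * p.2 i ^ ((m : ℕ) - 1))) := by
  simp only [momentDeriv, coe_pi', _root_.sum_apply, add_apply, smul_apply, comp_apply, coe_fst',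
    coe_snd', proj_apply, smul_eq_mul, nsmul_eq_mul]
  exact sum_congr rfl fun i _ => by ring

theorem hasStrictFDerivAt_momentMap (N : ℕ) (p : (ι → 𝕜) × (ι → 𝕜)) :
    HasStrictFDerivAt (momentMap N) (momentDeriv N p) p := by
  refine hasStrictFDerivAt_pi'.2 fun m => ?_
  rw [momentDeriv, proj_pi]
  exact .fun_sum fun i _ => (proj i ∘L fst 𝕜 _ _).hasStrictFDerivAt.mul
    ((proj i ∘L snd 𝕜 (ι → 𝕜) (ι → 𝕜)).hasStrictFDerivAt.pow _)

theorem momentDeriv_injective {N : ℕ} (hN : 2 * Fintype.card ι ≤ N)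
    {c ρ : ι → 𝕜} (hρ : Function.Injective ρ) (hc : ∀ i, c i ≠ 0) :
    Function.Injective (momentDeriv N (c, ρ)) := by
  rw [injective_iff_map_eq_zero]
  rintro ⟨u, v⟩ h
  have := eq_zero_of_sum_mul_pow_add_mul_derivative_eq_zero hρ hc fun m hm => by
    simpa [momentDeriv_apply] using congrFun h ⟨m, by omega⟩
  simpa using this

theorem exists_hasStrictFDerivAt_momentMap_equiv [CompleteSpace 𝕜] {N : ℕ}
    (hN : N = 2 * Fintype.card ι) {c ρ : ι → 𝕜} (hρ : Function.Injective ρ)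
    (hc : ∀ i, c i ≠ 0) :
    ∃ e : ((ι → 𝕜) × (ι → 𝕜)) ≃L[𝕜] (Fin N → 𝕜),
      HasStrictFDerivAt (momentMap N) (e : ((ι → 𝕜) × (ι → 𝕜)) →L[𝕜] (Fin N → 𝕜)) (c, ρ) := by
  have hdim : Module.finrank 𝕜 ((ι → 𝕜) × (ι → 𝕜)) = Module.finrank 𝕜 (Fin N → 𝕜) := by
    simp [hN, two_mul]
  exact ⟨(LinearMap.linearEquivOfInjective _ (momentDeriv_injective hN.ge hρ hc)
    hdim).toContinuousLinearEquiv, hasStrictFDerivAt_momentMap N (c, ρ)⟩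

end Moments

theorem isOpen_setOf_strictMono {ι α : Type*} [Finite ι] [Preorder ι] [TopologicalSpace α]
    [LinearOrder α] [OrderClosedTopology α] : IsOpen {f : ι → α | StrictMono f} := by
  simp only [StrictMono, Set.ofPred_forall]
  exact isOpen_iInter_of_finite fun i => isOpen_iInter_of_finite fun j =>
    isOpen_iInter_of_finite fun _ => isOpen_lt (continuous_apply i) (continuous_apply j)

theorem isOpen_setOf_forall_pos {ι α : Type*} [Finite ι] [TopologicalSpace α]
    [LinearOrder α] [OrderClosedTopology α] [Zero α] : IsOpen {f : ι → α | ∀ i, 0 < f i} := by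
  simp only [Set.ofPred_forall]
  exact isOpen_iInter_of_finite fun i => isOpen_lt continuous_const (continuous_apply i)

theorem moment_estimator_exists_unique_consistent_general (L : ℕ) (hL : 1 ≤ L)
    (ρ c : Fin L → ℝ) (hρ : StrictMono ρ)
    (hc : ∀ k, 0 < c k) (hcsum : ∑ k, c k = 1)
    (γhat : ℕ → ℕ → ℝ)
    (hconv : ∀ m : ℕ, 1 ≤ m → m ≤ 2 * L - 1 →
      Tendsto (fun n => γhat n m) atTop (nhds (∑ k, c k * ρ k ^ m))) :
    ∃ n₀ : ℕ, ∃ x y : ℕ → Fin L → ℝ,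
      (∀ n, n₀ ≤ n →
        ((∀ i, 0 < x n i) ∧ StrictMono (y n) ∧ (∑ i, x n i) = 1 ∧
          (∀ m : ℕ, 1 ≤ m → m ≤ 2 * L - 1 → ∑ i, x n i * y n i ^ m = γhat n m)) ∧
        (∀ x' y' : Fin L → ℝ,
          (∀ i, 0 < x' i) → StrictMono y' → (∑ i, x' i) = 1 →
          (∀ m : ℕ, 1 ≤ m → m ≤ 2 * L - 1 → ∑ i, x' i * y' i ^ m = γhat n m) →
          x' = x n ∧ y' = y n)) ∧
      (∀ i, Tendsto (fun n => x n i) atTop (nhds (c i)) ∧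
            Tendsto (fun n => y n i) atTop (nhds (ρ i))) := by
  -- the target moments, the normalisation `∑ x i = 1` being the zeroth one
  set G : ℕ → Fin (2 * L) → ℝ := fun n m => if (m : ℕ) = 0 then 1 else γhat n m
  have hsystem (n : ℕ) (x' y' : Fin L → ℝ) : momentMap (2 * L) (x', y') = G n ↔
      ∑ i, x' i = 1 ∧ ∀ m, 1 ≤ m → m ≤ 2 * L - 1 → ∑ i, x' i * y' i ^ m = γhat n m := by
    refine ⟨fun h => ⟨by simpa [momentMap, G] using congrFun h ⟨0, by omega⟩,
      fun m hm₁ hm₂ => ?_⟩, fun ⟨h₀, h⟩ => funext fun m => ?_⟩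
    · simpa [momentMap, G, Nat.one_le_iff_ne_zero.1 hm₁] using congrFun h ⟨m, by omega⟩
    · by_cases hm : (m : ℕ) = 0
      · simpa [momentMap, G, hm] using h₀
      · simpa [momentMap, G, hm] using h m (by omega) (by omega)
  have hG : Tendsto G atTop (𝓝 (momentMap (2 * L) (c, ρ))) := by
    refine tendsto_pi_nhds.2 fun m => ?_
    by_cases hm : (m : ℕ) = 0
    · simp [G, momentMap, hm, hcsum]
    · simpa [G, momentMap, hm] using hconv m (by omega) (by omega)
  obtain ⟨e, he⟩ := exists_hasStrictFDerivAt_momentMap_equiv (N := 2 * L) (by simp) hρ.injective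
    fun k => (hc k).ne'
  set q := he.localInverse _ _ _ ∘ G
  have hq : Tendsto q atTop (𝓝 (c, ρ)) := he.localInverse_tendsto.comp hG
  have hadm : ∀ᶠ n in atTop, (∀ i, 0 < (q n).1 i) ∧ StrictMono (q n).2 :=
    hq.eventually ((isOpen_setOf_forall_pos.prod isOpen_setOf_strictMono).mem_nhds ⟨hc, hρ⟩)
  obtain ⟨n₀, hn₀⟩ := eventually_atTop.1 ((hG.eventually he.eventually_right_inverse).and hadm)
  refine ⟨n₀, fun n => (q n).1, fun n => (q n).2, fun n hn => ?_, fun i =>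
    ⟨((continuous_apply i).tendsto _).comp hq.fst_nhds,
      ((continuous_apply i).tendsto _).comp hq.snd_nhds⟩⟩
  obtain ⟨hqG, hx, hy⟩ := hn₀ n hn
  refine ⟨⟨hx, hy, (hsystem n _ _).1 hqG⟩, fun x' y' hx' hy' h₀ h => ?_⟩
  exact Prod.ext_iff.1 <| momentMap_injOn ⟨fun i => (hx' i).ne', hy'⟩
    ⟨fun i => (hx i).ne', hy⟩ (((hsystem n x' y').2 ⟨h₀, h⟩).trans hqG.symm)

/-- **Existence, uniqueness and consistency of the moment-based estimator
(deterministic core of Theorem 4).**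
If `γ̂_m^{(n)} → γ_m = ∑_k c_k ρ_k^m` for `1 ≤ m ≤ 2L-1`, then for all large `n` the
system `∑ x_i = 1`, `∑ x_i y_i^m = γ̂_m^{(n)}` (`1 ≤ m ≤ 2L-1`) has exactly one solution
with positive weights `x_i` and strictly increasing nodes `y_1 < ⋯ < y_L`, and this
solution converges to `(c, ρ)`. -/
theorem moment_estimator_exists_unique_consistent (L : ℕ) (hL : 1 ≤ L)
    (ρ c : Fin L → ℝ) (hρpos : ∀ k, 0 < ρ k) (hρ : StrictMono ρ)
    (hc : ∀ k, 0 < c k) (hcsum : ∑ k, c k = 1)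
    (γhat : ℕ → ℕ → ℝ)
    (hconv : ∀ m : ℕ, 1 ≤ m → m ≤ 2 * L - 1 →
      Tendsto (fun n => γhat n m) atTop (nhds (∑ k, c k * ρ k ^ m))) :
    ∃ n₀ : ℕ, ∃ x y : ℕ → Fin L → ℝ,
      (∀ n, n₀ ≤ n →
        ((∀ i, 0 < x n i) ∧ StrictMono (y n) ∧ (∑ i, x n i) = 1 ∧
          (∀ m : ℕ, 1 ≤ m → m ≤ 2 * L - 1 → ∑ i, x n i * y n i ^ m = γhat n m)) ∧
        (∀ x' y' : Fin L → ℝ,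
          (∀ i, 0 < x' i) → StrictMono y' → (∑ i, x' i) = 1 →
          (∀ m : ℕ, 1 ≤ m → m ≤ 2 * L - 1 → ∑ i, x' i * y' i ^ m = γhat n m) →
          x' = x n ∧ y' = y n)) ∧
      (∀ i, Tendsto (fun n => x n i) atTop (nhds (c i)) ∧
            Tendsto (fun n => y n i) atTop (nhds (ρ i))) :=
  moment_estimator_exists_unique_consistent_general L hL ρ c hρ hc hcsum γhat hconv
end
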